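/- Let L̃ ∈ ℂ^{n×m} and R̃ ∈ ℂ^{m×n} with L̃R̃ = M for a real matrix M. Write L̃ = L_r + i L_c and R̃ = R_r + i R_c with real matrices L_r, L_c, R_r, R_c. Then the real matrices L̂ = [L_r L_c] ∈ ℝ^{n×2m} and R̂ = [R_r ; -R_c] ∈ ℝ^{2m×n} satisfy L̂R̂ = M, ‖L̂‖_{2→∞} = ‖L̃‖_{2→∞}, and ‖R̂‖_{1→2} = ‖R̃‖_{1→2}. -/

import Mathlib

open Complex Matrix

noncomputable def rowNorm {ι κ 𝕜 : Type*} [Fintype κ] [SeminormedAddCommGroup 𝕜]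
    (B : Matrix ι κ 𝕜) : ℝ :=
  ⨆ i, Real.sqrt (∑ j, ‖B i j‖ ^ 2)

noncomputable def colNorm {ι κ 𝕜 : Type*} [Fintype ι] [SeminormedAddCommGroup 𝕜]
    (C : Matrix ι κ 𝕜) : ℝ :=
  ⨆ j, Real.sqrt (∑ i, ‖C i j‖ ^ 2)

theorem stmt_12 (n m : ℕ)
    (Ltil : Matrix (Fin n) (Fin m) ℂ) (Rtil : Matrix (Fin m) (Fin n) ℂ)
    (M : Matrix (Fin n) (Fin n) ℝ)
    (hM : Ltil * Rtil = M.map (fun x => (x : ℂ)))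
    (Lr Lc : Matrix (Fin n) (Fin m) ℝ) (Rr Rc : Matrix (Fin m) (Fin n) ℝ)
    (hL : ∀ i j, Ltil i j = (Lr i j : ℂ) + Complex.I * (Lc i j : ℂ))
    (hR : ∀ i j, Rtil i j = (Rr i j : ℂ) + Complex.I * (Rc i j : ℂ)) :
    Matrix.fromCols Lr Lc * Matrix.fromRows Rr (-Rc) = M ∧
    rowNorm (Matrix.fromCols Lr Lc) = rowNorm Ltil ∧
    colNorm (Matrix.fromRows Rr (-Rc)) = colNorm Rtil := by
  refine ⟨?_, ?_, ?_⟩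
  · ext i j
    have h := congrFun (congrFun hM i) j
    simp only [Matrix.mul_apply, Matrix.map_apply] at h
    have h2 : (∑ k, Ltil i k * Rtil k j).re = M i j := by rw [h]; simp
    rw [Complex.re_sum] at h2
    have h3 : ∀ k, (Ltil i k * Rtil k j).re = Lr i k * Rr k j - Lc i k * Rc k j := by
      intro k
      rw [hL, hR]
      simp [Complex.mul_re]
    rw [Finset.sum_congr rfl (fun k _ => h3 k)] at h2
    rw [Matrix.fromCols_mul_fromRows]
    simp only [Matrix.add_apply, Matrix.mul_apply, Matrix.neg_apply]
    rw [← h2, Finset.sum_sub_distrib]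
    simp [mul_neg, Finset.sum_neg_distrib]
    ring
  · unfold rowNorm
    congr 1
    ext i
    congr 1
    rw [Fintype.sum_sum_type]
    have : ∀ j, ‖Ltil i j‖ ^ 2 = ‖Lr i j‖ ^ 2 + ‖Lc i j‖ ^ 2 := by
      intro j
      rw [hL]
      rw [Complex.sq_norm]
      simp [Complex.normSq_apply, Real.norm_eq_abs, _root_.sq_abs]
      ring
    rw [Finset.sum_congr rfl (fun j _ => this j), Finset.sum_add_distrib]
    simp [Matrix.fromCols_apply_inl, Matrix.fromCols_apply_inr]
  · unfold colNorm
    congr 1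
    ext j
    congr 1
    rw [Fintype.sum_sum_type]
    have : ∀ i, ‖Rtil i j‖ ^ 2 = ‖Rr i j‖ ^ 2 + ‖Rc i j‖ ^ 2 := by
      intro i
      rw [hR]
      rw [Complex.sq_norm]
      simp [Complex.normSq_apply, Real.norm_eq_abs, _root_.sq_abs]
      ring
    rw [Finset.sum_congr rfl (fun i _ => this i), Finset.sum_add_distrib]
    simp [Matrix.fromRows_apply_inl, Matrix.fromRows_apply_inr]
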